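/- Let A = FᵀF, let x ∈ ℝⁿ with A x ≠ 0, set u = F x/‖F x‖, and let v ∈ ℝʳ satisfy ‖v‖ ≤ 1 and vᵀF x = 0. Then H_x(u,v) = 2I − (Fᵀv)(Fᵀv)ᵀ/(xᵀAx)^{1/2}, and the sandwich 2I ⪰ H_x(u,v) ⪰ ∇²f(x) holds in the Loewner order; i.e. the surrogate curvature H_x(u,v) is tighter than the power-method curvature 2I. -/

import Mathlib

/-!
With `w = F x` we have `Fᵀ u = A x / ‖w‖` and `xᵀAx = ‖w‖²`, so the `u`-term of `H_x(u,v)` cancels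
the rank-one correction `(Ax)(Ax)ᵀ/(xᵀAx)^{3/2}`, leaving `2I − (Fᵀv)(Fᵀv)ᵀ/‖w‖ ⪯ 2I`. Moreover
`H_x(u,v) − ∇²f(x) = Fᵀ (I − v vᵀ − w wᵀ/‖w‖²) F / ‖w‖`, and the middle factor is positive
semidefinite by Bessel's inequality, as `v ⊥ w` and `‖v‖ ≤ 1`.
-/

open Matrix

/-- View a plain vector `Fin r → ℝ` as an element of Euclidean space. -/
def toEuc {r : ℕ} (w : Fin r → ℝ) : EuclideanSpace ℝ (Fin r) := WithLp.toLp 2 w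

namespace Matrix

variable {m n : Type*} [Fintype m]

lemma transpose_mul_vecMulVec_mul (F : Matrix m n ℝ) (a b : m → ℝ) :
    Fᵀ * vecMulVec a b * F = vecMulVec (Fᵀ *ᵥ a) (Fᵀ *ᵥ b) := by
  simp only [mul_vecMulVec, vecMulVec_mul, mulVec_transpose]

lemma sq_dotProduct_le_dotProduct_self_mul (a b : m → ℝ) :
    (a ⬝ᵥ b) ^ 2 ≤ (a ⬝ᵥ a) * (b ⬝ᵥ b) := by
  simpa only [dotProduct, sq] using Finset.sum_mul_sq_le_sq_mul_sq Finset.univ a b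

/-- Bessel's inequality; for `w = 0` the second term is `0 / 0 = 0`. -/
lemma sq_dotProduct_add_sq_dotProduct_div_le {v w : m → ℝ} (hvw : v ⬝ᵥ w = 0)
    (hv : v ⬝ᵥ v ≤ 1) (z : m → ℝ) :
    (v ⬝ᵥ z) ^ 2 + (w ⬝ᵥ z) ^ 2 / (w ⬝ᵥ w) ≤ z ⬝ᵥ z := by
  set z' := z - ((w ⬝ᵥ z) / (w ⬝ᵥ w)) • w
  have hvz' : v ⬝ᵥ z' = v ⬝ᵥ z := by simp [z', dotProduct_sub, hvw]
  have hz' : z' ⬝ᵥ z' = z ⬝ᵥ z - (w ⬝ᵥ z) ^ 2 / (w ⬝ᵥ w) := by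
    by_cases hw : w = 0
    · simp [z', hw]
    have hww : w ⬝ᵥ w ≠ 0 := mt dotProduct_self_eq_zero.mp hw
    simp only [z', dotProduct_sub, sub_dotProduct, dotProduct_smul, smul_dotProduct,
      smul_eq_mul, dotProduct_comm w z]
    field_simp
    ring
  have hz'_nonneg : 0 ≤ z' ⬝ᵥ z' := by simpa using dotProduct_self_star_nonneg z'
  have hv_nonneg : 0 ≤ v ⬝ᵥ v := by simpa using dotProduct_self_star_nonneg v
  calc (v ⬝ᵥ z) ^ 2 + (w ⬝ᵥ z) ^ 2 / (w ⬝ᵥ w)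
      ≤ (v ⬝ᵥ v) * (z' ⬝ᵥ z') + (w ⬝ᵥ z) ^ 2 / (w ⬝ᵥ w) := by
        gcongr; rw [← hvz']; exact sq_dotProduct_le_dotProduct_self_mul v z'
    _ ≤ z' ⬝ᵥ z' + (w ⬝ᵥ z) ^ 2 / (w ⬝ᵥ w) := by gcongr; nlinarith
    _ = z ⬝ᵥ z := by rw [hz']; ring

lemma posSemidef_vecMulVec_self (a : m → ℝ) : (vecMulVec a a).PosSemidef := by
  simpa using posSemidef_vecMulVec_self_star a

lemma posSemidef_one_sub_vecMulVec_sub_smul_vecMulVec [DecidableEq m] {v w : m → ℝ}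
    (hvw : v ⬝ᵥ w = 0) (hv : v ⬝ᵥ v ≤ 1) :
    (1 - vecMulVec v v - (w ⬝ᵥ w)⁻¹ • vecMulVec w w).PosSemidef := by
  refine PosSemidef.of_dotProduct_mulVec_nonneg
    ((isHermitian_one.sub (posSemidef_vecMulVec_self v).isHermitian).sub
      ((posSemidef_vecMulVec_self w).isHermitian.smul (.all _))) fun z => ?_
  have := sq_dotProduct_add_sq_dotProduct_div_le hvw hv z
  simp only [star_trivial, sub_mulVec, one_mulVec, smul_mulVec, vecMulVec_mulVec,
    op_smul_eq_smul, dotProduct_sub, dotProduct_smul, smul_eq_mul, dotProduct_comm z v,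
    dotProduct_comm z w]
  rw [div_eq_inv_mul] at this
  nlinarith

end Matrix

lemma EuclideanSpace.dotProduct_self_eq_norm_sq {ι : Type*} [Fintype ι]
    (v : EuclideanSpace ℝ ι) : v.ofLp ⬝ᵥ v.ofLp = ‖v‖ ^ 2 := by
  simp [EuclideanSpace.real_norm_sq_eq, dotProduct, ← sq]

theorem stmt_10_general {r n : ℕ}
    (F : Matrix (Fin r) (Fin n) ℝ) (A : Matrix (Fin n) (Fin n) ℝ)
    (hAF : A = Fᵀ * F)
    (x : Fin n → ℝ)
    (u v : EuclideanSpace ℝ (Fin r))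
    (hu : u = ‖toEuc (F.mulVec x)‖⁻¹ • toEuc (F.mulVec x))
    (hv : ‖v‖ ≤ 1) (hvFx : v ⬝ᵥ F.mulVec x = 0)
    (H hess : Matrix (Fin n) (Fin n) ℝ)
    (hHdef : H = (2 : ℝ) • (1 : Matrix (Fin n) (Fin n) ℝ)
        - (Real.sqrt (x ⬝ᵥ A.mulVec x))⁻¹ • (Fᵀ * (vecMulVec u u + vecMulVec v v) * F)
        + (Real.sqrt (x ⬝ᵥ A.mulVec x) ^ 3)⁻¹ • vecMulVec (A.mulVec x) (A.mulVec x))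
    (hhessdef : hess = (2 : ℝ) • (1 : Matrix (Fin n) (Fin n) ℝ)
        - (Real.sqrt (x ⬝ᵥ A.mulVec x))⁻¹ • A
        + (Real.sqrt (x ⬝ᵥ A.mulVec x) ^ 3)⁻¹ • vecMulVec (A.mulVec x) (A.mulVec x)) :
    H = (2 : ℝ) • (1 : Matrix (Fin n) (Fin n) ℝ)
        - (Real.sqrt (x ⬝ᵥ A.mulVec x))⁻¹ • vecMulVec (Fᵀ.mulVec v) (Fᵀ.mulVec v) ∧
    ((2 : ℝ) • (1 : Matrix (Fin n) (Fin n) ℝ) - H).PosSemidef ∧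
    (H - hess).PosSemidef := by
  set w := F *ᵥ x
  set s := Real.sqrt (x ⬝ᵥ A *ᵥ x)
  have hAx : A *ᵥ x = Fᵀ *ᵥ w := by rw [hAF, ← mulVec_mulVec]
  have hq : x ⬝ᵥ A *ᵥ x = w ⬝ᵥ w := by rw [hAx, dotProduct_mulVec, vecMul_transpose]
  have hs_sq : s ^ 2 = w ⬝ᵥ w := by
    rw [Real.sq_sqrt (hq ▸ by simpa using dotProduct_self_star_nonneg w), hq]
  have hnorm : ‖toEuc w‖ = s := by
    rw [← sq_eq_sq₀ (norm_nonneg _) (Real.sqrt_nonneg _), hs_sq,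
      ← EuclideanSpace.dotProduct_self_eq_norm_sq]
    rfl
  have hFuuF : Fᵀ * vecMulVec u u * F = (s ^ 2)⁻¹ • vecMulVec (A *ᵥ x) (A *ᵥ x) := by
    rw [transpose_mul_vecMulVec_mul, hu, hnorm, hAx]
    simp [toEuc, mulVec_smul, smul_vecMulVec, vecMulVec_smul, smul_smul, sq]
  have hH : H = (2 : ℝ) • (1 : Matrix (Fin n) (Fin n) ℝ)
      - s⁻¹ • vecMulVec (Fᵀ *ᵥ v) (Fᵀ *ᵥ v) := by
    rw [hHdef, Matrix.mul_add, Matrix.add_mul, hFuuF, transpose_mul_vecMulVec_mul]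
    module
  refine ⟨hH, ?_, ?_⟩
  · rw [hH, sub_sub_cancel]
    exact (posSemidef_vecMulVec_self _).smul (inv_nonneg.mpr (Real.sqrt_nonneg _))
  · have hv1 : v.ofLp ⬝ᵥ v.ofLp ≤ 1 :=
      (EuclideanSpace.dotProduct_self_eq_norm_sq v).trans_le (pow_le_one₀ (norm_nonneg v) hv)
    have hdiff : H - hess =
        s⁻¹ • (Fᴴ * (1 - vecMulVec v v - (w ⬝ᵥ w)⁻¹ • vecMulVec w w) * F) := by
      rw [hH, hhessdef, conjTranspose_eq_transpose_of_trivial, Matrix.mul_sub, Matrix.sub_mul,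
        Matrix.mul_sub, Matrix.sub_mul, Matrix.mul_smul, Matrix.smul_mul, Matrix.mul_one,
        transpose_mul_vecMulVec_mul, transpose_mul_vecMulVec_mul, ← hAx, ← hAF, ← hs_sq]
      module
    rw [hdiff]
    exact ((posSemidef_one_sub_vecMulVec_sub_smul_vecMulVec hvFx hv1).conjTranspose_mul_mul_same
      F).smul (inv_nonneg.mpr (Real.sqrt_nonneg _))

/-- Let `A = FᵀF`, `x` with `A x ≠ 0`, `u = F x/‖F x‖`, and `v` with `‖v‖ ≤ 1`,
`vᵀF x = 0`. Then `H_x(u,v) = 2I − (Fᵀv)(Fᵀv)ᵀ/(xᵀAx)^{1/2}` and the sandwich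
`2I ⪰ H_x(u,v) ⪰ ∇²f(x)` holds in the Loewner order. -/
theorem stmt_10 {r n : ℕ} (hn : 0 < n)
    (F : Matrix (Fin r) (Fin n) ℝ) (A : Matrix (Fin n) (Fin n) ℝ)
    (hAF : A = Fᵀ * F)
    (x : Fin n → ℝ) (hx : A.mulVec x ≠ 0)
    (u v : EuclideanSpace ℝ (Fin r))
    (hu : u = ‖toEuc (F.mulVec x)‖⁻¹ • toEuc (F.mulVec x))
    (hv : ‖v‖ ≤ 1) (hvFx : v ⬝ᵥ F.mulVec x = 0)
    (H hess : Matrix (Fin n) (Fin n) ℝ)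
    (hHdef : H = (2 : ℝ) • (1 : Matrix (Fin n) (Fin n) ℝ)
        - (Real.sqrt (x ⬝ᵥ A.mulVec x))⁻¹ • (Fᵀ * (vecMulVec u u + vecMulVec v v) * F)
        + (Real.sqrt (x ⬝ᵥ A.mulVec x) ^ 3)⁻¹ • vecMulVec (A.mulVec x) (A.mulVec x))
    (hhessdef : hess = (2 : ℝ) • (1 : Matrix (Fin n) (Fin n) ℝ)
        - (Real.sqrt (x ⬝ᵥ A.mulVec x))⁻¹ • A
        + (Real.sqrt (x ⬝ᵥ A.mulVec x) ^ 3)⁻¹ • vecMulVec (A.mulVec x) (A.mulVec x)) :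
    H = (2 : ℝ) • (1 : Matrix (Fin n) (Fin n) ℝ)
        - (Real.sqrt (x ⬝ᵥ A.mulVec x))⁻¹ • vecMulVec (Fᵀ.mulVec v) (Fᵀ.mulVec v) ∧
    ((2 : ℝ) • (1 : Matrix (Fin n) (Fin n) ℝ) - H).PosSemidef ∧
    (H - hess).PosSemidef :=
  stmt_10_general F A hAF x u v hu hv hvFx H hess hHdef hhessdef
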